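/- arXiv:0912.0723 — 3 statements merged into one kernel-verified Lean document; each statement's English description precedes it below -/
import Mathlib

section
/- The centre of the group of units of I_n is K^*: a unit u of I_n commutes with every unit of I_n if and only if u = λ·1 for some λ ∈ K∖{0}. -/
open MvPolynomial

/-- Multiplication by `x_i`, as a `K`-linear endomorphism of `K[x_1,…,x_n]`. -/
noncomputable def xOp (K : Type*) [Field K] (n : ℕ) (i : Fin n) :
    Module.End K (MvPolynomial (Fin n) K) :=
  LinearMap.mulLeft K (X i)

/-- The formal partial derivative `∂/∂x_i`. -/
noncomputable def dOp (K : Type*) [Field K] (n : ℕ) (i : Fin n) :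
    Module.End K (MvPolynomial (Fin n) K) :=
  (pderiv i).toLinearMap

/-- The integration operator `∫_i`, determined by `∫_i(x^α) = x^α·x_i/(α_i+1)`. -/
noncomputable def intOp (K : Type*) [Field K] (n : ℕ) (i : Fin n) :
    Module.End K (MvPolynomial (Fin n) K) :=
  (basisMonomials (Fin n) K).constr K
    (fun α => (((α i : ℕ) : K) + 1)⁻¹ • (monomial (α + Finsupp.single i 1) (1 : K)))

/-- The algebra `I_n` of polynomial integro-differential operators:
the `K`-subalgebra of `End_K(P_n)` generated by the `X_i`, `∂_i` and `∫_i`. -/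
noncomputable def IDO (K : Type*) [Field K] (n : ℕ) :
    Subalgebra K (Module.End K (MvPolynomial (Fin n) K)) :=
  Algebra.adjoin K (Set.range (xOp K n) ∪ Set.range (dOp K n) ∪ Set.range (intOp K n))

/-- `X_i` as an element of `I_n`. -/
noncomputable def xElt (K : Type*) [Field K] (n : ℕ) (i : Fin n) : IDO K n :=
  ⟨xOp K n i, Algebra.subset_adjoin (Or.inl (Or.inl ⟨i, rfl⟩))⟩

/-- `∂_i` as an element of `I_n`. -/
noncomputable def dElt (K : Type*) [Field K] (n : ℕ) (i : Fin n) : IDO K n :=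
  ⟨dOp K n i, Algebra.subset_adjoin (Or.inl (Or.inr ⟨i, rfl⟩))⟩

/-- `∫_i` as an element of `I_n`. -/
noncomputable def intElt (K : Type*) [Field K] (n : ℕ) (i : Fin n) : IDO K n :=
  ⟨intOp K n i, Algebra.subset_adjoin (Or.inr ⟨i, rfl⟩)⟩

/-!
The operators `E_{αβ} : x^γ ↦ δ_{γβ} x^α` all lie in `I_n`: `E_{00} = ∏_i (1 - ∫_i ∂_i)` is the
projection onto the constants, `E_{αβ} = x^α E_{0β}`, and `E_{0,β+e_i}` is a multiple of
`E_{0β} ∂_i`. Each `1 + E_{αβ}` is a unit of `I_n` (`E_{αβ}` is square-zero for `α ≠ β` and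
idempotent for `α = β`), so a central unit commutes with every `E_{αβ}`, and an endomorphism
commuting with all `E_{α0}` is a scalar.
-/

theorem Commute.of_forall_units_of_isUnit_one_add {R : Type*} [Ring R] {x e : R}
    (hx : ∀ v : Rˣ, Commute x v) (he : IsUnit (1 + e)) : Commute x e := by
  obtain ⟨v, hv⟩ := he
  have := (hx v).sub_right (Commute.one_right x)
  rwa [hv, add_sub_cancel_left] at this

theorem IsIdempotentElem.isUnit_one_add {K A : Type*} [Field K] [NeZero (2 : K)] [Ring A]
    [Algebra K A] {e : A} (he : IsIdempotentElem e) : IsUnit (1 + e) := by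
  refine ⟨⟨1 + e, 1 - (2⁻¹ : K) • e, ?_, ?_⟩, rfl⟩
  · simp only [mul_sub, add_mul, mul_smul_comm, one_mul, mul_one, he.eq]
    match_scalars <;> field_simp
    ring
  · simp only [sub_mul, mul_add, smul_mul_assoc, one_mul, mul_one, he.eq]
    match_scalars <;> field_simp
    ring

theorem Finsupp.induction_add_single_one {σ : Type*} {P : (σ →₀ ℕ) → Prop} (zero : P 0)
    (add_single_one : ∀ β i, P β → P (β + Finsupp.single i 1)) (β : σ →₀ ℕ) : P β := by
  induction β using Finsupp.induction with
  | zero => exact zero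
  | single_add i m β hi hm hβ =>
    clear hi hm
    induction m with
    | zero => simpa using hβ
    | succ m hm => simpa [Finsupp.single_add, add_right_comm] using add_single_one _ i hm

namespace Module.Basis

variable {ι R M : Type*} [CommSemiring R] [AddCommMonoid M] [Module R M] (b : Basis ι R M)

noncomputable def matrixUnit (i j : ι) : Module.End R M :=
  LinearMap.toSpanSingleton R M (b i) ∘ₗ b.coord j

theorem matrixUnit_apply (i j : ι) (x : M) : b.matrixUnit i j x = b.coord j x • b i := rfl

theorem matrixUnit_apply_basis [DecidableEq ι] (i j k : ι) :
    b.matrixUnit i j (b k) = if k = j then b i else 0 := by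
  simp [matrixUnit_apply, Finsupp.single_apply]

theorem matrixUnit_mul_matrixUnit [DecidableEq ι] (i j k l : ι) :
    b.matrixUnit i j * b.matrixUnit k l = if k = j then b.matrixUnit i l else 0 := by
  ext x
  split_ifs with h <;> simp [matrixUnit_apply, h]

theorem eq_algebraMap_of_commute_matrixUnit (f : Module.End R M) (j : ι)
    (hf : ∀ i, Commute f (b.matrixUnit i j)) : f = algebraMap R _ (b.coord j (f (b j))) := by
  refine b.ext fun i => ?_
  have := LinearMap.congr_fun (hf i).eq (b j)
  simp_all [matrixUnit_apply]

end Module.Basis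

@[simp]
theorem MvPolynomial.basisMonomials_repr_apply {σ R : Type*} [CommSemiring R]
    (p : MvPolynomial σ R) (m : σ →₀ ℕ) : (basisMonomials σ R).repr p m = p.coeff m :=
  rfl

section IntegroDifferential

variable {K : Type*} [Field K] {n : ℕ}

theorem intOp_monomial (i : Fin n) (γ : Fin n →₀ ℕ) :
    intOp K n i (monomial γ 1) = ((γ i : K) + 1)⁻¹ • monomial (γ + Finsupp.single i 1) 1 := by
  simpa [intOp] using (basisMonomials (Fin n) K).constr_basis K
    (fun α => ((α i : K) + 1)⁻¹ • monomial (α + Finsupp.single i 1) (1 : K)) γ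

theorem intOp_dOp_monomial [CharZero K] (i : Fin n) (γ : Fin n →₀ ℕ) :
    intOp K n i (dOp K n i (monomial γ 1)) = if γ i = 0 then 0 else monomial γ 1 := by
  change intOp K n i (pderiv i (monomial γ 1)) = _
  rw [pderiv_monomial]
  split_ifs with h
  · simp [h]
  · obtain ⟨k, hk⟩ := Nat.exists_eq_succ_of_ne_zero h
    have hle : Finsupp.single i 1 ≤ γ := Finsupp.single_le_iff.mpr (by omega)
    have hsub : (γ - Finsupp.single i 1 : Fin n →₀ ℕ) i = k := by simp [hk]
    have hd : monomial (γ - Finsupp.single i 1) (γ i : K) =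
        (γ i : K) • monomial (γ - Finsupp.single i 1) 1 := by
      rw [smul_monomial, smul_eq_mul, mul_one]
    rw [one_mul, hd, map_smul, intOp_monomial, hsub, tsub_add_cancel_of_le hle, smul_smul, hk]
    push_cast
    rw [mul_inv_cancel₀ (Nat.cast_add_one_ne_zero k), one_smul]

theorem matrixUnit_basisMonomials_zero_zero [CharZero K] :
    (basisMonomials (Fin n) K).matrixUnit 0 0 =
      ((List.finRange n).map fun i => 1 - intOp K n i * dOp K n i).prod := by
  have key : ∀ (l : List (Fin n)) (γ : Fin n →₀ ℕ),
      (l.map fun i => 1 - intOp K n i * dOp K n i).prod (monomial γ 1) =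
        if ∀ i ∈ l, γ i = 0 then monomial γ 1 else 0 := by
    intro l γ
    induction l with
    | nil => simp
    | cons a l ih =>
      rw [List.map_cons, List.prod_cons, Module.End.mul_apply, ih]
      split_ifs <;> simp_all [intOp_dOp_monomial]
  refine (basisMonomials (Fin n) K).ext fun γ => ?_
  rw [Module.Basis.matrixUnit_apply_basis, coe_basisMonomials, key]
  rcases eq_or_ne γ 0 with rfl | hγ
  · simp
  · obtain ⟨i, hi⟩ := Finsupp.ne_iff.mp hγ
    rw [if_neg hγ, if_neg fun h => hi (h i (List.mem_finRange i))]

theorem matrixUnit_basisMonomials_add_single_one [CharZero K] (α β : Fin n →₀ ℕ) (i : Fin n) :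
    (basisMonomials (Fin n) K).matrixUnit α (β + Finsupp.single i 1) =
      ((β i : K) + 1)⁻¹ • ((basisMonomials (Fin n) K).matrixUnit α β * dOp K n i) := by
  refine (basisMonomials (Fin n) K).ext fun γ => ?_
  change _ = ((β i : K) + 1)⁻¹ • (basisMonomials (Fin n) K).matrixUnit α β
    (pderiv i (monomial γ 1))
  rw [coe_basisMonomials, pderiv_monomial]
  by_cases hγ : γ i = 0
  · have : γ ≠ β + Finsupp.single i 1 := fun h => by simp [h] at hγ
    simp [hγ, this, Module.Basis.matrixUnit_apply]
  · obtain ⟨δ, rfl⟩ : ∃ δ, γ = δ + Finsupp.single i 1 :=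
      ⟨γ - Finsupp.single i 1, (tsub_add_cancel_of_le (Finsupp.single_le_iff.mpr (by omega))).symm⟩
    rcases eq_or_ne δ β with rfl | hδ
    · simp [Module.Basis.matrixUnit_apply, smul_smul, Nat.cast_add_one_ne_zero]
    · simp [hδ, Module.Basis.matrixUnit_apply]

theorem matrixUnit_basisMonomials_eq_lmul_mul (α β : Fin n →₀ ℕ) :
    (basisMonomials (Fin n) K).matrixUnit α β =
      Algebra.lmul K _ (monomial α 1) * (basisMonomials (Fin n) K).matrixUnit 0 β := by
  ext p
  simp [Module.Basis.matrixUnit_apply]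

theorem lmul_mem_IDO (p : MvPolynomial (Fin n) K) : Algebra.lmul K _ p ∈ IDO K n := by
  have : Algebra.adjoin K (Set.range X) ≤ (IDO K n).comap (Algebra.lmul K _) :=
    Algebra.adjoin_le (Set.range_subset_iff.mpr fun i => (xElt K n i).2)
  exact this (adjoin_range_X (R := K) ▸ Algebra.mem_top)

theorem matrixUnit_basisMonomials_mem_IDO [CharZero K] (α β : Fin n →₀ ℕ) :
    (basisMonomials (Fin n) K).matrixUnit α β ∈ IDO K n := by
  rw [matrixUnit_basisMonomials_eq_lmul_mul]
  refine mul_mem (lmul_mem_IDO _) ?_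
  induction β using Finsupp.induction_add_single_one with
  | zero =>
    rw [matrixUnit_basisMonomials_zero_zero]
    refine Subalgebra.list_prod_mem _ fun f hf => ?_
    obtain ⟨i, -, rfl⟩ := List.mem_map.mp hf
    exact sub_mem (one_mem _) (mul_mem (intElt K n i).2 (dElt K n i).2)
  | add_single_one β i hβ =>
    rw [matrixUnit_basisMonomials_add_single_one]
    exact Subalgebra.smul_mem _ (mul_mem hβ (dElt K n i).2) _

theorem commute_matrixUnit_basisMonomials_of_forall_units [CharZero K] {x : IDO K n}
    (hx : ∀ v : (IDO K n)ˣ, Commute x v) (α β : Fin n →₀ ℕ) :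
    Commute (x : Module.End K (MvPolynomial (Fin n) K))
      ((basisMonomials (Fin n) K).matrixUnit α β) := by
  let e : IDO K n := ⟨_, matrixUnit_basisMonomials_mem_IDO α β⟩
  have he : IsUnit (1 + e) := by
    rcases eq_or_ne α β with rfl | hαβ
    · refine IsIdempotentElem.isUnit_one_add (K := K) (A := IDO K n) (Subtype.ext ?_)
      simp [e, Module.Basis.matrixUnit_mul_matrixUnit]
    · refine IsNilpotent.isUnit_one_add (R := IDO K n) ⟨2, Subtype.ext ?_⟩
      simp [e, pow_two, Module.Basis.matrixUnit_mul_matrixUnit, hαβ]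
  exact congrArg Subtype.val (Commute.of_forall_units_of_isUnit_one_add (R := IDO K n) hx he).eq

end IntegroDifferential

/-- The centre of the group of units of `I_n` is `K^*`: a unit of `I_n` commutes with every
unit of `I_n` if and only if it is a nonzero scalar `λ·1`. -/
theorem statement10 (K : Type*) [Field K] [CharZero K] (n : ℕ) :
    ∀ u : (IDO K n)ˣ, (∀ v : (IDO K n)ˣ, u * v = v * u) ↔
      ∃ lam : K, lam ≠ 0 ∧ (u : IDO K n) = algebraMap K (IDO K n) lam := by
  intro u
  constructor
  · intro hu
    have hscalar := (basisMonomials (Fin n) K).eq_algebraMap_of_commute_matrixUnit _ 0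
      fun α => commute_matrixUnit_basisMonomials_of_forall_units
        (fun v => Commute.units_val (hu v)) α 0
    refine ⟨_, fun h0 => u.ne_zero (Subtype.ext ?_), Subtype.ext hscalar⟩
    rw [hscalar, h0, map_zero]
    rfl
  · rintro ⟨lam, -, hu⟩ v
    exact Units.ext <| by rw [Units.val_mul, Units.val_mul, hu]; exact Algebra.commutes lam _
end

section
/- The left I_n-module P_n is isomorphic to the quotient module I_n / (I_n∂_1 + ⋯ + I_n∂_n), and P_n is a projective left I_n-module. -/
/-!
Let `π = ∏ᵢ (1 - ∫ᵢ∂ᵢ) ∈ I_n`. The factor `1 - ∫ᵢ∂ᵢ` fixes the monomials not involving `xᵢ`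
and kills the others (this is where characteristic zero enters), so `π` is the projection
`q ↦ q(0)` onto the constants. Hence each rank-one operator `q ↦ q(0) • p = p · π(q)` lies in
`I_n`, and `p ↦ (q ↦ q(0) • p)` is an `I_n`-linear section of the evaluation `a ↦ a(1)`:
`P_n` is a direct summand of `I_n`, hence projective. If `a(1) = 0` then `aπ = 0`, so
`a = a(1 - π)`, and `1 - π ∈ ∑ᵢ I_n∂ᵢ` since every factor `1 - ∫ᵢ∂ᵢ` is `1` modulo this
left ideal.
-/

set_option synthInstance.maxHeartbeats 1000000
set_option maxHeartbeats 2000000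

open MvPolynomial

/-- `P_n` is a module over `I_n` via the evaluation action of endomorphisms on polynomials. -/
noncomputable instance instModuleIDO (K : Type*) [Field K] (n : ℕ) :
    Module (IDO K n) (MvPolynomial (Fin n) K) :=
  Module.compHom (MvPolynomial (Fin n) K) (Subalgebra.val (IDO K n)).toRingHom

theorem Submodule.one_sub_prod_one_sub_mem {A : Type*} [Ring A] {J : Submodule A A} :
    ∀ l : List A, (∀ b ∈ l, b ∈ J) → 1 - (l.map (1 - ·)).prod ∈ J
  | [], _ => by simp
  | b :: l, hl => by
    have key : 1 - (1 - b) * (l.map (1 - ·)).prod =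
        (1 - b) * (1 - (l.map (1 - ·)).prod) + b := by
      noncomm_ring
    rw [List.map_cons, List.prod_cons, key]
    exact J.add_mem (J.smul_mem _ (one_sub_prod_one_sub_mem l fun c hc =>
      hl c (List.mem_cons_of_mem b hc))) (hl b List.mem_cons_self)

namespace IDO

variable {K : Type*} [Field K] {n : ℕ}

theorem intOp_monomial_one (i : Fin n) (α : Fin n →₀ ℕ) :
    intOp K n i (monomial α 1) = ((α i : K) + 1)⁻¹ • monomial (α + Finsupp.single i 1) 1 :=
  (basisMonomials (Fin n) K).constr_basis K _ α

theorem mulLeft_mem (p : MvPolynomial (Fin n) K) : LinearMap.mulLeft K p ∈ IDO K n := by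
  have hp : p ∈ Algebra.adjoin K (Set.range X) := by simp [adjoin_range_X]
  have hmap : Algebra.lmul K _ p ∈ (Algebra.adjoin K (Set.range X)).map (Algebra.lmul K _) :=
    Subalgebra.mem_map.2 ⟨p, hp, rfl⟩
  rw [AlgHom.map_adjoin, ← Set.range_comp] at hmap
  exact Algebra.adjoin_mono (Set.subset_union_of_subset_left Set.subset_union_left _) hmap

variable (K n) in
noncomputable def proj : IDO K n :=
  ((List.finRange n).map fun i => 1 - intElt K n i * dElt K n i).prod

theorem one_sub_proj_mem_iSup_span_dElt :
    1 - proj K n ∈ ⨆ i, Submodule.span (IDO K n) {dElt K n i} := by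
  have hmem : ∀ i, intElt K n i * dElt K n i ∈ ⨆ i, Submodule.span (IDO K n) {dElt K n i} :=
    fun i => Submodule.mem_iSup_of_mem i <|
      Submodule.smul_mem _ _ (Submodule.mem_span_singleton_self _)
  simpa only [List.map_map, Function.comp_def, proj] using
    Submodule.one_sub_prod_one_sub_mem ((List.finRange n).map fun i => intElt K n i * dElt K n i)
      (List.forall_mem_map.2 fun i _ => hmem i)

variable [CharZero K]

theorem one_sub_intOp_mul_dOp_monomial (i : Fin n) (α : Fin n →₀ ℕ) (c : K) :
    (1 - intOp K n i * dOp K n i) (monomial α c) = if α i = 0 then monomial α c else 0 := by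
  split_ifs with h
  · simp [dOp, pderiv_monomial, h]
  · obtain ⟨β, rfl⟩ : ∃ β, α = β + Finsupp.single i 1 :=
      ⟨α - Finsupp.single i 1, by ext j; rcases eq_or_ne j i with rfl | hj <;> simp [*]; omega⟩
    have hd : dOp K n i (monomial (β + Finsupp.single i 1) 1) =
        ((β i : K) + 1) • monomial β 1 := by
      simp [dOp, pderiv_monomial, smul_monomial]
    rw [show monomial _ c = c • monomial _ (1 : K) by rw [smul_monomial, smul_eq_mul, mul_one]]
    rw [map_smul, LinearMap.sub_apply, Module.End.mul_apply, hd, map_smul, intOp_monomial_one,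
      smul_inv_smul₀ (Nat.cast_add_one_ne_zero (β i)), Module.End.one_apply, sub_self, smul_zero]

theorem prod_one_sub_intOp_mul_dOp_monomial (l : List (Fin n)) (α : Fin n →₀ ℕ) (c : K) :
    (l.map fun i => 1 - intOp K n i * dOp K n i).prod (monomial α c) =
      if ∀ i ∈ l, α i = 0 then monomial α c else 0 := by
  induction l with
  | nil => simp
  | cons j l ih =>
    rw [List.map_cons, List.prod_cons, Module.End.mul_apply, ih]
    by_cases hl : ∀ i ∈ l, α i = 0
    · rw [if_pos hl, one_sub_intOp_mul_dOp_monomial]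
      simp only [List.forall_mem_cons, and_iff_left hl]
    · rw [if_neg hl, map_zero, if_neg fun h => hl (List.forall_mem_cons.1 h).2]

theorem coe_proj :
    (proj K n : Module.End K (MvPolynomial (Fin n) K)) = (lcoeff K 0).smulRight 1 := by
  have hprod : (proj K n : Module.End K (MvPolynomial (Fin n) K)) =
      ((List.finRange n).map fun i => 1 - intOp K n i * dOp K n i).prod := by
    rw [proj, ← Subalgebra.coe_val, map_list_prod, List.map_map]
    rfl
  refine MvPolynomial.linearMap_ext fun α => LinearMap.ext_ring ?_
  have hα : (∀ i ∈ List.finRange n, α i = 0) ↔ α = 0 := by simp [Finsupp.ext_iff]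
  simp only [LinearMap.comp_apply, hprod, prod_one_sub_intOp_mul_dOp_monomial, hα,
    LinearMap.smulRight_apply, lcoeff_apply, coeff_monomial]
  split_ifs with h
  · rw [h, one_smul, monomial_zero', C_1]
  · rw [zero_smul]

theorem smulRight_mem (p : MvPolynomial (Fin n) K) : (lcoeff K 0).smulRight p ∈ IDO K n := by
  have : (lcoeff K 0).smulRight p = LinearMap.mulLeft K p * (proj K n : Module.End K _) :=
    LinearMap.ext fun q => by simp [coe_proj, smul_eq_C_mul, mul_comm]
  exact this ▸ mul_mem (mulLeft_mem p) (proj K n).2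

variable (K n) in
noncomputable def constSection : MvPolynomial (Fin n) K →ₗ[IDO K n] IDO K n where
  toFun p := ⟨(lcoeff K 0).smulRight p, smulRight_mem p⟩
  map_add' _ _ := Subtype.ext <| LinearMap.ext fun _ => smul_add _ _ _
  map_smul' a p := Subtype.ext <| LinearMap.ext fun r =>
    (map_smul (a : Module.End K (MvPolynomial (Fin n) K)) (lcoeff K 0 r) p).symm

theorem toSpanSingleton_one_comp_constSection :
    LinearMap.toSpanSingleton (IDO K n) (MvPolynomial (Fin n) K) 1 ∘ₗ constSection K n =
      LinearMap.id :=
  LinearMap.ext fun p => show lcoeff K 0 1 • p = p by simp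

theorem ker_toSpanSingleton_one :
    LinearMap.ker (LinearMap.toSpanSingleton (IDO K n) (MvPolynomial (Fin n) K) 1) =
      ⨆ i, Submodule.span (IDO K n) {dElt K n i} := by
  refine le_antisymm (fun a ha => ?_) (iSup_le fun i => ?_)
  · have ha : (a : Module.End K (MvPolynomial (Fin n) K)) 1 = 0 := ha
    have hproj : a * proj K n = 0 :=
      Subtype.ext <| LinearMap.ext fun q => by simp [coe_proj, ha]
    have : a * (1 - proj K n) = a := by
      rw [mul_sub a 1 (proj K n), hproj, mul_one]
      exact sub_zero a
    rw [← this]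
    exact Submodule.smul_mem _ a one_sub_proj_mem_iSup_span_dElt
  · rw [Submodule.span_le, Set.singleton_subset_iff]
    show dOp K n i 1 = 0
    simp [dOp]

end IDO

/-- The left `I_n`-module `P_n` is isomorphic to the quotient `I_n / (I_n∂_1 + ⋯ + I_n∂_n)`
(expressed by a surjective `I_n`-linear map `I_n → P_n` with kernel `I_n∂_1 + ⋯ + I_n∂_n`),
and `P_n` is a projective left `I_n`-module. -/
theorem statement16 (K : Type*) [Field K] [CharZero K] (n : ℕ) :
    (∃ f : IDO K n →ₗ[IDO K n] MvPolynomial (Fin n) K, Function.Surjective f ∧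
      LinearMap.ker f = ⨆ i : Fin n, Submodule.span (IDO K n) {dElt K n i}) ∧
    Module.Projective (IDO K n) (MvPolynomial (Fin n) K) := by
  have hsplit := IDO.toSpanSingleton_one_comp_constSection (K := K) (n := n)
  exact ⟨⟨_, fun p => ⟨IDO.constSection K n p, LinearMap.congr_fun hsplit p⟩,
    IDO.ker_toSpanSingleton_one⟩, Module.Projective.of_split _ _ hsplit⟩
end

section
/- There exists a K-algebra isomorphism φ : I_n → (I_n)^op (equivalently, a K-linear anti-automorphism of I_n) such that φ(∂_i) = ∫_i, φ(∫_i) = ∂_i and φ(∂_i∘X_i) = ∂_i∘X_i for all 1 ≤ i ≤ n, which is involutive (applying it twice is the identity); moreover φ maps every two-sided ideal a of I_n onto itself (a* = a). In particular the algebra I_n is self-dual, i.e. isomorphic to its opposite algebra. -/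
open MvPolynomial

/-!
The anti-automorphism is the adjoint for the symmetric bilinear form on `K[x_1,…,x_n]` in which
the monomials are orthogonal and `B(x^α, x^α) = ∏ (α_i!)²`. For this form `∂_i` and `∫_i` are
adjoint to each other and `x_i` is adjoint to `∂_i x_i ∂_i`, so `I_n` is closed under adjoints;
the form is nondegenerate, so adjoints are unique, and taking adjoints is an involutive
anti-automorphism.

For the ideals, split `a ∈ I` into components homogeneous of multidegree `d ∈ ℤⁿ`. These are
eigenvectors of the commutators with the Euler operators `x_i ∂_i`, with distinct eigenvalues, so
each component lies in `I`. Since `∂_i ∫_i = 1`, a homogeneous `a` of degree `d ≠ 0` factors as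
`∂_i (∫_i a)` or `(a ∂_i) ∫_i` with a factor in `I` of degree closer to `0`, and degree-zero
operators are diagonal in the monomial basis, hence self-adjoint.
-/

theorem TwoSidedIdeal.mem_of_sum_mem_of_commutator_eq_smul {K A ι κ : Type*} [Field K] [Ring A]
    [Algebra K A] (I : TwoSidedIdeal A) (H : ι → A) (ev : κ → ι → K) {s : Finset κ}
    (hev : Set.InjOn ev s) {x : κ → A} (hx : ∀ j ∈ s, ∀ i, H i * x j - x j * H i = ev j i • x j)
    (hsum : ∑ j ∈ s, x j ∈ I) : ∀ j ∈ s, x j ∈ I := by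
  classical
  have smul_mem : ∀ (c : K) {y : A}, y ∈ I → c • y ∈ I := fun c y hy => by
    rw [Algebra.smul_def]
    exact I.mul_mem_left _ _ hy
  induction s using Finset.induction_on generalizing x with
  | empty => simp
  | insert a s ha ih =>
    -- `[H i, -] - ev a i` kills `x a` and rescales the other `x j`
    have hscaled : ∀ i, ∀ j ∈ s, (ev j i - ev a i) • x j ∈ I := fun i => by
      refine ih (hev.mono (by simp)) (fun j hj i' => ?_) ?_
      · rw [mul_smul_comm, smul_mul_assoc, ← smul_sub, hx j (Finset.mem_insert_of_mem hj),
          smul_comm]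
      · have hS : ∑ j ∈ insert a s, (ev j i - ev a i) • x j =
            H i * ∑ j ∈ insert a s, x j - (∑ j ∈ insert a s, x j) * H i -
              ev a i • ∑ j ∈ insert a s, x j := by
          simp only [Finset.mul_sum, Finset.sum_mul, Finset.smul_sum, ← Finset.sum_sub_distrib]
          exact Finset.sum_congr rfl fun j hj => by rw [hx j hj i, sub_smul]
        rw [Finset.sum_insert ha, sub_self, zero_smul, zero_add] at hS
        rw [hS]
        exact I.sub_mem (I.sub_mem (I.mul_mem_left _ _ hsum) (I.mul_mem_right _ _ hsum))
          (smul_mem _ hsum)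
    have hs : ∀ j ∈ s, x j ∈ I := fun j hj => by
      have hne : ev j ≠ ev a := hev.ne (by simp [hj]) (by simp) (ne_of_mem_of_not_mem hj ha)
      obtain ⟨i, hi⟩ := Function.ne_iff.1 hne
      simpa [smul_smul, inv_mul_cancel₀ (sub_ne_zero.2 hi)] using
        smul_mem (ev j i - ev a i)⁻¹ (hscaled i j hj)
    rw [Finset.sum_insert ha] at hsum
    intro j hj
    rcases Finset.mem_insert.1 hj with rfl | hj
    · simpa using I.sub_mem hsum (sum_mem hs)
    · exact hs j hj

namespace IDO

open Finsupp (single)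

variable {K : Type*} [Field K] {n : ℕ}

lemma xOp_monomial (i : Fin n) (α : Fin n →₀ ℕ) (c : K) :
    xOp K n i (monomial α c) = monomial (α + single i 1) c := by
  rw [xOp, LinearMap.mulLeft_apply, X, monomial_mul, one_mul, add_comm]

lemma dOp_monomial (i : Fin n) (α : Fin n →₀ ℕ) (c : K) :
    dOp K n i (monomial α c) = monomial (α - single i 1) (c * (α i : ℕ)) :=
  pderiv_monomial

lemma intOp_monomial (i : Fin n) (α : Fin n →₀ ℕ) (c : K) :
    intOp K n i (monomial α c) = ((α i : K) + 1)⁻¹ • monomial (α + single i 1) c := by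
  have hα : monomial α c = c • basisMonomials (Fin n) K α := by
    rw [coe_basisMonomials, smul_monomial, smul_eq_mul, mul_one]
  rw [hα, map_smul, intOp, Module.Basis.constr_basis, smul_comm, smul_monomial, smul_eq_mul,
    mul_one]

lemma xOp_mul_dOp_monomial (i : Fin n) (α : Fin n →₀ ℕ) (c : K) :
    (xOp K n i * dOp K n i) (monomial α c) = (α i : K) • monomial α c := by
  rw [Module.End.mul_apply, dOp_monomial, xOp_monomial, smul_monomial, smul_eq_mul, mul_comm]
  rcases Nat.eq_zero_or_pos (α i) with hα | hα
  · simp [hα]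
  · rw [tsub_add_cancel_of_le (Finsupp.single_le_iff.2 hα)]

lemma exists_eq_add_single {α : Fin n →₀ ℕ} {i : Fin n} (h : α i ≠ 0) :
    ∃ γ, α = γ + single i 1 :=
  ⟨α - single i 1, (tsub_add_cancel_of_le (Finsupp.single_le_iff.2 (Nat.pos_of_ne_zero h))).symm⟩

variable (K) in
noncomputable def weight (α : Fin n →₀ ℕ) : K :=
  ∏ i, ((α i).factorial : K) ^ 2

variable (K) in
noncomputable def form : LinearMap.BilinForm K (MvPolynomial (Fin n) K) :=
  (basisMonomials (Fin n) K).constr K fun α => weight K α • lcoeff K α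

lemma form_monomial (α : Fin n →₀ ℕ) (q : MvPolynomial (Fin n) K) :
    form K (monomial α 1) q = weight K α * coeff α q := by
  have hα : monomial α (1 : K) = basisMonomials (Fin n) K α := by rw [coe_basisMonomials]
  rw [hα, form, Module.Basis.constr_basis]
  rfl

lemma form_comm (p q : MvPolynomial (Fin n) K) : form K p q = form K q p := by
  suffices form K = LinearMap.flip (form K) from congrArg (· p q) this
  refine LinearMap.ext_basis (basisMonomials (Fin n) K) (basisMonomials (Fin n) K) fun α β => ?_
  rw [coe_basisMonomials, LinearMap.flip_apply, form_monomial, form_monomial, coeff_monomial,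
    coeff_monomial]
  by_cases h : α = β
  · rw [h]
  · rw [if_neg h, if_neg (Ne.symm h), mul_zero, mul_zero]

lemma weight_add_single (α : Fin n →₀ ℕ) (i : Fin n) :
    weight K (α + single i 1) = ((α i : K) + 1) ^ 2 * weight K α := by
  classical
  rw [weight, weight, Fintype.prod_eq_mul_prod_compl i,
    Fintype.prod_eq_mul_prod_compl i (fun j => ((α j).factorial : K) ^ 2), ← mul_assoc]
  congr 1
  · simp only [Finsupp.coe_add, Pi.add_apply, Finsupp.single_eq_same, Nat.factorial_succ,
      Nat.cast_mul, Nat.cast_add, Nat.cast_one]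
    ring
  · refine Finset.prod_congr rfl fun j hj => ?_
    obtain hji : j ≠ i := by simpa using hj
    simp [hji.symm]

lemma isAdjointPair_of_monomial {T S : Module.End K (MvPolynomial (Fin n) K)}
    (h : ∀ α β : Fin n →₀ ℕ, weight K β * coeff β (T (monomial α 1)) =
      weight K α * coeff α (S (monomial β 1))) :
    (form K).IsAdjointPair (form K) T S := by
  refine LinearMap.isAdjointPair_iff_comp_eq_compl₂.2 <|
    (basisMonomials (Fin n) K).ext fun α => (basisMonomials (Fin n) K).ext fun β => ?_
  simp only [LinearMap.comp_apply, LinearMap.compl₂_apply, coe_basisMonomials]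
  rw [form_comm, form_monomial, form_monomial]
  exact h α β

lemma isAdjointPair_swap {T S : Module.End K (MvPolynomial (Fin n) K)}
    (h : (form K).IsAdjointPair (form K) T S) : (form K).IsAdjointPair (form K) S T := by
  intro p q
  rw [form_comm, ← h, form_comm]

section Homogeneous

def IsHomogeneous (d : Fin n → ℤ) (T : Module.End K (MvPolynomial (Fin n) K)) : Prop :=
  ∀ α, ∀ β ∈ (T (monomial α 1)).support, ∀ i, (β i : ℤ) = α i + d i

variable (K n) in
noncomputable def homogeneousSubmodule (d : Fin n → ℤ) :
    Submodule K (Module.End K (MvPolynomial (Fin n) K)) where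
  carrier := {T | IsHomogeneous d T}
  zero_mem' _ _ hβ := by simp at hβ
  add_mem' {T T'} hT hT' α β hβ := by
    classical
    exact (Finset.mem_union.1 (support_add hβ)).elim (hT α β) (hT' α β)
  smul_mem' _ _ hT α β hβ := hT α β (support_smul hβ)

lemma exists_mem_support_of_mem_support_apply {T : Module.End K (MvPolynomial (Fin n) K)}
    {p : MvPolynomial (Fin n) K} {β : Fin n →₀ ℕ} (hβ : β ∈ (T p).support) :
    ∃ γ ∈ p.support, β ∈ (T (monomial γ 1)).support := by
  have hTp : T p = ∑ γ ∈ p.support, coeff γ p • T (monomial γ 1) := by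
    conv_lhs => rw [p.as_sum]
    simp only [map_sum, ← map_smul, smul_eq_mul, mul_one]
  rw [mem_support_iff, hTp, coeff_sum] at hβ
  obtain ⟨γ, hγ, hne⟩ := Finset.exists_ne_zero_of_sum_ne_zero hβ
  rw [coeff_smul, smul_eq_mul] at hne
  exact ⟨γ, hγ, mem_support_iff.2 (right_ne_zero_of_mul hne)⟩

lemma IsHomogeneous.mul {d e : Fin n → ℤ} {T T' : Module.End K (MvPolynomial (Fin n) K)}
    (hT : IsHomogeneous d T) (hT' : IsHomogeneous e T') : IsHomogeneous (d + e) (T * T') := by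
  intro α β hβ i
  rw [Module.End.mul_apply] at hβ
  obtain ⟨γ, hγ, hβγ⟩ := exists_mem_support_of_mem_support_apply hβ
  rw [hT γ β hβγ i, hT' α γ hγ i, Pi.add_apply]
  ring

lemma isHomogeneous_one : IsHomogeneous 0 (1 : Module.End K (MvPolynomial (Fin n) K)) := by
  intro α β hβ i
  rw [Finset.mem_singleton.1 (support_monomial_subset hβ)]
  simp

lemma isHomogeneous_xOp (i : Fin n) : IsHomogeneous (Pi.single i 1) (xOp K n i) := by
  intro α β hβ j
  rw [xOp_monomial] at hβ
  rw [Finset.mem_singleton.1 (support_monomial_subset hβ)]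
  rcases eq_or_ne j i with rfl | h <;> simp [*]

lemma isHomogeneous_intOp (i : Fin n) : IsHomogeneous (Pi.single i 1) (intOp K n i) := by
  intro α β hβ j
  rw [intOp_monomial] at hβ
  rw [Finset.mem_singleton.1 (support_monomial_subset (support_smul hβ))]
  rcases eq_or_ne j i with rfl | h <;> simp [*]

lemma isHomogeneous_dOp (i : Fin n) : IsHomogeneous (Pi.single i (-1)) (dOp K n i) := by
  intro α β hβ j
  rw [dOp_monomial] at hβ
  by_cases hα : α i = 0
  · simp [hα] at hβ
  obtain ⟨γ, rfl⟩ := exists_eq_add_single hα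
  rw [add_tsub_cancel_right] at hβ
  rw [Finset.mem_singleton.1 (support_monomial_subset hβ)]
  rcases eq_or_ne j i with rfl | h <;> simp [*]

lemma xOp_mul_dOp_apply_of_forall_mem_support {i : Fin n} {p : MvPolynomial (Fin n) K} {c : K}
    (h : ∀ β ∈ p.support, (β i : K) = c) : (xOp K n i * dOp K n i) p = c • p := by
  conv_lhs => rw [p.as_sum]
  rw [map_sum, Finset.sum_congr rfl fun β hβ => by rw [xOp_mul_dOp_monomial, h β hβ],
    ← Finset.smul_sum, ← p.as_sum]

lemma IsHomogeneous.commutator {d : Fin n → ℤ} {T : Module.End K (MvPolynomial (Fin n) K)}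
    (hT : IsHomogeneous d T) (i : Fin n) :
    xOp K n i * dOp K n i * T - T * (xOp K n i * dOp K n i) = (d i : K) • T := by
  refine (basisMonomials (Fin n) K).ext fun α => ?_
  have hshift : ∀ β ∈ (T (monomial α 1)).support, (β i : K) = α i + d i := fun β hβ => by
    have h := congrArg (Int.cast : ℤ → K) (hT α β hβ i)
    push_cast at h
    exact h
  simp only [coe_basisMonomials]
  rw [LinearMap.sub_apply, Module.End.mul_apply (xOp K n i * dOp K n i), Module.End.mul_apply T,
    xOp_mul_dOp_monomial, map_smul, xOp_mul_dOp_apply_of_forall_mem_support hshift, ← sub_smul,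
    add_sub_cancel_left, LinearMap.smul_apply]

lemma IsHomogeneous.isAdjointPair_self {T : Module.End K (MvPolynomial (Fin n) K)}
    (hT : IsHomogeneous 0 T) : (form K).IsAdjointPair (form K) T T := by
  have hdiag : ∀ α β, β ≠ α → coeff β (T (monomial α 1)) = 0 := fun α β hne => by
    by_contra hc
    exact hne (Finsupp.ext fun i => by simpa using hT α β (mem_support_iff.2 hc) i)
  refine isAdjointPair_of_monomial fun α β => ?_
  by_cases hαβ : α = β
  · rw [hαβ]
  · rw [hdiag α β (Ne.symm hαβ), hdiag β α hαβ, mul_zero, mul_zero]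

end Homogeneous

section Decomposition

variable (K n) in
noncomputable def homogeneousPart (d : Fin n → ℤ) :
    Submodule K (Module.End K (MvPolynomial (Fin n) K)) :=
  Subalgebra.toSubmodule (IDO K n) ⊓ homogeneousSubmodule K n d

lemma mul_mem_homogeneousPart {d e : Fin n → ℤ} {T T' : Module.End K (MvPolynomial (Fin n) K)}
    (hT : T ∈ homogeneousPart K n d) (hT' : T' ∈ homogeneousPart K n e) :
    T * T' ∈ homogeneousPart K n (d + e) :=
  ⟨Subalgebra.mul_mem _ hT.1 hT'.1, IsHomogeneous.mul hT.2 hT'.2⟩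

lemma mul_mem_iSup_homogeneousPart {T T' : Module.End K (MvPolynomial (Fin n) K)}
    (hT : T ∈ ⨆ d, homogeneousPart K n d) (hT' : T' ∈ ⨆ d, homogeneousPart K n d) :
    T * T' ∈ ⨆ d, homogeneousPart K n d := by
  refine Submodule.iSup_induction (motive := (· * T' ∈ _)) _ hT (fun d S hS => ?_) (by simp)
    fun _ _ h h' => by rw [add_mul]; exact add_mem h h'
  refine Submodule.iSup_induction (motive := (S * · ∈ _)) _ hT' (fun e S' hS' => ?_) (by simp)
    fun _ _ h h' => by rw [mul_add]; exact add_mem h h'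
  exact Submodule.mem_iSup_of_mem _ (mul_mem_homogeneousPart hS hS')

lemma mem_iSup_homogeneousPart {T : Module.End K (MvPolynomial (Fin n) K)} (hT : T ∈ IDO K n) :
    T ∈ ⨆ d, homogeneousPart K n d := by
  induction hT using Algebra.adjoin_induction with
  | mem T hT =>
    rcases hT with (⟨i, rfl⟩ | ⟨i, rfl⟩) | ⟨i, rfl⟩
    · exact Submodule.mem_iSup_of_mem _ ⟨(xElt K n i).2, isHomogeneous_xOp i⟩
    · exact Submodule.mem_iSup_of_mem _ ⟨(dElt K n i).2, isHomogeneous_dOp i⟩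
    · exact Submodule.mem_iSup_of_mem _ ⟨(intElt K n i).2, isHomogeneous_intOp i⟩
  | algebraMap r =>
    refine Submodule.mem_iSup_of_mem 0 ⟨Subalgebra.algebraMap_mem _ r, ?_⟩
    rw [Algebra.algebraMap_eq_smul_one]
    exact Submodule.smul_mem _ r isHomogeneous_one
  | add _ _ _ _ h h' => exact add_mem h h'
  | mul _ _ _ _ h h' => exact mul_mem_iSup_homogeneousPart h h'

end Decomposition

variable [CharZero K]

lemma weight_ne_zero (α : Fin n →₀ ℕ) : weight K α ≠ 0 :=
  Finset.prod_ne_zero_iff.2 fun _ _ => pow_ne_zero _ (Nat.cast_ne_zero.2 (Nat.factorial_ne_zero _))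

lemma isAdjointPair_unique {T S S' : Module.End K (MvPolynomial (Fin n) K)}
    (h : (form K).IsAdjointPair (form K) T S) (h' : (form K).IsAdjointPair (form K) T S') :
    S = S' := by
  refine LinearMap.ext fun q => MvPolynomial.ext _ _ fun α => ?_
  have := (h (monomial α 1) q).symm.trans (h' (monomial α 1) q)
  rw [form_monomial, form_monomial] at this
  exact mul_left_cancel₀ (weight_ne_zero α) this

lemma dOp_mul_intOp (i : Fin n) : dOp K n i * intOp K n i = 1 := by
  refine (basisMonomials (Fin n) K).ext fun α => ?_
  have hαi : (((α + single i 1 : Fin n →₀ ℕ) i : ℕ) : K) = α i + 1 := by simp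
  rw [coe_basisMonomials, Module.End.mul_apply, intOp_monomial, map_smul, dOp_monomial,
    add_tsub_cancel_right, hαi, one_mul, smul_monomial, smul_eq_mul,
    inv_mul_cancel₀ (Nat.cast_add_one_ne_zero (α i)), Module.End.one_apply]

lemma isAdjointPair_dOp_intOp (i : Fin n) :
    (form K).IsAdjointPair (form K) (dOp K n i) (intOp K n i) := by
  refine isAdjointPair_of_monomial fun α β => ?_
  rw [dOp_monomial, intOp_monomial, coeff_smul, coeff_monomial, coeff_monomial, one_mul]
  by_cases hα : α i = 0
  · have hβα : β + single i 1 ≠ α := fun h => by simp [← h] at hα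
    simp [hα, hβα]
  obtain ⟨γ, rfl⟩ := exists_eq_add_single hα
  simp only [add_tsub_cancel_right, add_left_inj]
  by_cases h : γ = β
  · subst h
    have hγ : ((γ i : K) + 1) ≠ 0 := Nat.cast_add_one_ne_zero _
    simp only [if_true, weight_add_single, Finsupp.add_apply, Finsupp.single_eq_same, smul_eq_mul]
    push_cast
    field_simp
  · rw [if_neg h, if_neg (Ne.symm h), mul_zero, smul_zero, mul_zero]

lemma isAdjointPair_xOp (i : Fin n) :
    (form K).IsAdjointPair (form K) (xOp K n i)
      (dOp K n i * xOp K n i * dOp K n i : Module.End K (MvPolynomial (Fin n) K)) := by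
  refine isAdjointPair_of_monomial fun α β => ?_
  rw [mul_assoc (dOp K n i), Module.End.mul_apply, xOp_mul_dOp_monomial, map_smul, dOp_monomial,
    xOp_monomial, coeff_smul, coeff_monomial, coeff_monomial, one_mul]
  by_cases hβ : β i = 0
  · have hαβ : α + single i 1 ≠ β := fun h => by simp [← h] at hβ
    simp [hβ, hαβ]
  obtain ⟨γ, rfl⟩ := exists_eq_add_single hβ
  simp only [add_tsub_cancel_right, add_left_inj]
  by_cases h : α = γ
  · subst h
    simp only [if_true, weight_add_single, Finsupp.add_apply, Finsupp.single_eq_same]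
    push_cast
    ring
  · rw [if_neg h, if_neg (Ne.symm h), mul_zero, smul_zero, mul_zero]

section Adjoint

open MulOpposite

lemma exists_isAdjointPair (a : IDO K n) :
    ∃ b : IDO K n, (form K).IsAdjointPair (form K) a.1 b.1 := by
  obtain ⟨T, hT⟩ := a
  suffices ∃ S ∈ IDO K n, (form K).IsAdjointPair (form K) T S from
    let ⟨S, hS, h⟩ := this; ⟨⟨S, hS⟩, h⟩
  induction hT using Algebra.adjoin_induction with
  | mem T hT =>
    rcases hT with (⟨i, rfl⟩ | ⟨i, rfl⟩) | ⟨i, rfl⟩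
    · exact ⟨_, (dElt K n i * xElt K n i * dElt K n i).2, isAdjointPair_xOp i⟩
    · exact ⟨_, (intElt K n i).2, isAdjointPair_dOp_intOp i⟩
    · exact ⟨_, (dElt K n i).2, isAdjointPair_swap (isAdjointPair_dOp_intOp i)⟩
  | algebraMap r =>
    refine ⟨_, Subalgebra.algebraMap_mem _ r, ?_⟩
    rw [Algebra.algebraMap_eq_smul_one]
    exact LinearMap.isAdjointPair_one.smul r
  | add _ _ _ _ h h' =>
    obtain ⟨S, hS, hTS⟩ := h
    obtain ⟨S', hS', hTS'⟩ := h'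
    exact ⟨S + S', add_mem hS hS', hTS.add hTS'⟩
  | mul _ _ _ _ h h' =>
    obtain ⟨S, hS, hTS⟩ := h
    obtain ⟨S', hS', hTS'⟩ := h'
    exact ⟨S' * S, mul_mem hS' hS, hTS.mul hTS'⟩

noncomputable def adjoint (a : IDO K n) : IDO K n :=
  (exists_isAdjointPair a).choose

lemma isAdjointPair_adjoint (a : IDO K n) :
    (form K).IsAdjointPair (form K) a.1 (adjoint a).1 :=
  (exists_isAdjointPair a).choose_spec

lemma adjoint_eq_of_isAdjointPair {a b : IDO K n}
    (h : (form K).IsAdjointPair (form K) a.1 b.1) : adjoint a = b :=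
  Subtype.ext (isAdjointPair_unique (isAdjointPair_adjoint a) h)

lemma adjoint_add (a b : IDO K n) : adjoint (a + b) = adjoint a + adjoint b :=
  adjoint_eq_of_isAdjointPair ((isAdjointPair_adjoint a).add (isAdjointPair_adjoint b))

lemma adjoint_mul (a b : IDO K n) : adjoint (a * b) = adjoint b * adjoint a :=
  adjoint_eq_of_isAdjointPair ((isAdjointPair_adjoint a).mul (isAdjointPair_adjoint b))

lemma adjoint_adjoint (a : IDO K n) : adjoint (adjoint a) = a :=
  adjoint_eq_of_isAdjointPair (isAdjointPair_swap (isAdjointPair_adjoint a))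

lemma adjoint_algebraMap (r : K) :
    adjoint (algebraMap K (IDO K n) r) = algebraMap K (IDO K n) r := by
  refine adjoint_eq_of_isAdjointPair ?_
  rw [Subalgebra.coe_algebraMap, Algebra.algebraMap_eq_smul_one]
  exact LinearMap.isAdjointPair_one.smul r

lemma adjoint_dElt (i : Fin n) : adjoint (dElt K n i) = intElt K n i :=
  adjoint_eq_of_isAdjointPair (isAdjointPair_dOp_intOp i)

lemma adjoint_intElt (i : Fin n) : adjoint (intElt K n i) = dElt K n i :=
  adjoint_eq_of_isAdjointPair (isAdjointPair_swap (isAdjointPair_dOp_intOp i))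

lemma adjoint_xElt (i : Fin n) : adjoint (xElt K n i) = dElt K n i * xElt K n i * dElt K n i :=
  adjoint_eq_of_isAdjointPair (isAdjointPair_xOp i)

lemma dElt_mul_intElt (i : Fin n) : dElt K n i * intElt K n i = 1 :=
  Subtype.ext (dOp_mul_intOp i)

variable (K n) in
noncomputable def adjointEquiv : IDO K n ≃ₐ[K] (IDO K n)ᵐᵒᵖ where
  toFun a := op (adjoint a)
  invFun b := adjoint b.unop
  left_inv := adjoint_adjoint
  right_inv b := by simp [adjoint_adjoint]
  map_mul' a b := by simp [adjoint_mul]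
  map_add' a b := by simp [adjoint_add]
  commutes' r := by simp [adjoint_algebraMap]

@[simp]
lemma adjointEquiv_apply (a : IDO K n) : adjointEquiv K n a = op (adjoint a) := rfl

end Adjoint

section Ideals

lemma sum_natAbs_add_single_lt {d : Fin n → ℤ} {i : Fin n} {c : ℤ}
    (h : (d i + c).natAbs < (d i).natAbs) :
    ∑ j, ((d + Pi.single i c : Fin n → ℤ) j).natAbs < ∑ j, (d j).natAbs := by
  refine Finset.sum_lt_sum (fun j _ => ?_) ⟨i, Finset.mem_univ _, by simpa using h⟩
  rcases eq_or_ne j i with rfl | hj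
  · simpa using h.le
  · simp [hj]

theorem adjoint_mem_of_isHomogeneous {I : TwoSidedIdeal (IDO K n)} {d : Fin n → ℤ}
    {a : IDO K n} (hd : IsHomogeneous d a.1) (ha : a ∈ I) : adjoint a ∈ I := by
  by_cases h0 : d = 0
  · subst h0
    rwa [adjoint_eq_of_isAdjointPair hd.isAdjointPair_self]
  obtain ⟨i, hi⟩ : ∃ i, d i ≠ 0 := Function.ne_iff.1 h0
  rcases lt_or_gt_of_ne hi with hneg | hpos
  · have hfac : a = dElt K n i * (intElt K n i * a) := by
      rw [← mul_assoc, dElt_mul_intElt, one_mul]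
    have h := adjoint_mem_of_isHomogeneous (a := intElt K n i * a)
      ((isHomogeneous_intOp i).mul hd) (I.mul_mem_left (intElt K n i) a ha)
    rw [hfac, adjoint_mul, adjoint_dElt]
    exact I.mul_mem_right _ _ h
  · have hfac : a = a * dElt K n i * intElt K n i := by
      rw [mul_assoc, dElt_mul_intElt, mul_one]
    have h := adjoint_mem_of_isHomogeneous (a := a * dElt K n i) (hd.mul (isHomogeneous_dOp i))
      (I.mul_mem_right a (dElt K n i) ha)
    rw [hfac, adjoint_mul, adjoint_intElt]
    exact I.mul_mem_left _ _ h
termination_by ∑ j, (d j).natAbs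
decreasing_by
  · rw [add_comm]
    exact sum_natAbs_add_single_lt (by omega)
  · exact sum_natAbs_add_single_lt (by omega)

theorem adjoint_mem {I : TwoSidedIdeal (IDO K n)} {a : IDO K n} (ha : a ∈ I) : adjoint a ∈ I := by
  obtain ⟨f, hf, hsum⟩ :=
    (Submodule.mem_iSup_iff_exists_finsupp _ _).1 (mem_iSup_homogeneousPart a.2)
  let c : (Fin n → ℤ) → IDO K n := fun d => ⟨f d, (hf d).1⟩
  have ha_sum : a = ∑ d ∈ f.support, c d := Subtype.ext (by simp [c, ← hsum, Finsupp.sum])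
  have hc : ∀ d ∈ f.support, c d ∈ I :=
    I.mem_of_sum_mem_of_commutator_eq_smul (fun i => xElt K n i * dElt K n i)
      (fun d i => (d i : K)) (fun d _ d' _ h => funext fun i => Int.cast_injective (congrFun h i))
      (fun d _ i => Subtype.ext (by exact (hf d).2.commutator i)) (ha_sum ▸ ha)
  have hadj : adjoint a = ∑ d ∈ f.support, adjoint (c d) := by
    rw [ha_sum]
    have h := congrArg MulOpposite.unop (map_sum (adjointEquiv K n) c f.support)
    simpa only [adjointEquiv_apply, MulOpposite.unop_op, Finset.unop_sum] using h
  rw [hadj]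
  exact sum_mem fun d hd => adjoint_mem_of_isHomogeneous (hf d).2 (hc d hd)

end Ideals

end IDO

open MulOpposite in
/-- There is an involutive `K`-algebra isomorphism `φ : I_n → (I_n)ᵒᵖ` (an anti-automorphism
of `I_n`) with `φ(∂_i) = ∫_i`, `φ(∫_i) = ∂_i` and `φ(∂_i∘X_i) = ∂_i∘X_i`, and `φ` maps every
two-sided ideal of `I_n` onto itself. In particular `I_n` is self-dual. -/
theorem statement19 (K : Type*) [Field K] [CharZero K] (n : ℕ) :
    ∃ φ : IDO K n ≃ₐ[K] (IDO K n)ᵐᵒᵖ,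
      (∀ i : Fin n, φ (dElt K n i) = op (intElt K n i)) ∧
      (∀ i : Fin n, φ (intElt K n i) = op (dElt K n i)) ∧
      (∀ i : Fin n, φ (dElt K n i * xElt K n i) = op (dElt K n i * xElt K n i)) ∧
      (∀ a : IDO K n, unop (φ (unop (φ a))) = a) ∧
      (∀ (I : TwoSidedIdeal (IDO K n)) (x : IDO K n), x ∈ I ↔ unop (φ x) ∈ I) := by
  refine ⟨IDO.adjointEquiv K n, fun i => ?_, fun i => ?_, fun i => ?_, fun a => ?_, fun I x => ?_⟩
  · rw [IDO.adjointEquiv_apply, IDO.adjoint_dElt]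
  · rw [IDO.adjointEquiv_apply, IDO.adjoint_intElt]
  · rw [IDO.adjointEquiv_apply, IDO.adjoint_mul, IDO.adjoint_xElt, IDO.adjoint_dElt, mul_assoc,
      IDO.dElt_mul_intElt, mul_one]
  · simp only [IDO.adjointEquiv_apply, unop_op, IDO.adjoint_adjoint]
  · refine ⟨fun h => IDO.adjoint_mem h, fun h => ?_⟩
    simpa only [IDO.adjointEquiv_apply, unop_op, IDO.adjoint_adjoint] using IDO.adjoint_mem h
end
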